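/- For every integer k ≥ 3 and every graph H whose girth ℓ is odd, H is not locally k-common: for every ε₀ > 0 there exist graphons W₁,…,W_k with W₁+⋯+W_k = 1, ‖W_i − 1/k‖_∞ ≤ ε₀ for all i, and t(H,W₁)+⋯+t(H,W_k) < k^{−e(H)+1}. -/

import Mathlib

open MeasureTheory

noncomputable section

/-- The Lebesgue measure restricted to `[0,1]`. -/
abbrev muI : Measure ℝ := volume.restrict (Set.Icc 0 1)

/-- A graphon: a symmetric measurable function `[0,1]² → [0,1]`
(represented as a function on `ℝ²`). -/
def IsGraphon (W : ℝ → ℝ → ℝ) : Prop :=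
  Measurable (Function.uncurry W) ∧ (∀ x y, W x y = W y x) ∧
    (∀ x y, W x y ∈ Set.Icc (0:ℝ) 1)

/-- The edges of a graph on `Fin m`, each listed once as an ordered pair. -/
def edgeFinset' {m : ℕ} (G : SimpleGraph (Fin m)) [DecidableRel G.Adj] :
    Finset (Fin m × Fin m) :=
  Finset.univ.filter fun p => p.1 < p.2 ∧ G.Adj p.1 p.2

/-- The number of edges of `G`. -/
def edgeCount {m : ℕ} (G : SimpleGraph (Fin m)) [DecidableRel G.Adj] : ℕ :=
  (edgeFinset' G).card

/-- The homomorphism density `t(G, W)`. -/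
def homDensity {m : ℕ} (G : SimpleGraph (Fin m)) [DecidableRel G.Adj]
    (W : ℝ → ℝ → ℝ) : ℝ :=
  ∫ x : Fin m → ℝ, ∏ p ∈ edgeFinset' G, W (x p.1) (x p.2)
    ∂(Measure.pi fun _ => muI)

/-- The single-edge graph `K₂`. -/
abbrev K2 : SimpleGraph (Fin 2) := ⊤

/-- The complete bipartite graph `K_{a,b}` on `Fin (a+b)`. -/
def bip (a b : ℕ) : SimpleGraph (Fin (a + b)) where
  Adj i j := (decide (i.val < a)) ≠ (decide (j.val < a))
  symm := ⟨fun _ _ h => h.symm⟩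
  loopless := ⟨fun _ h => h rfl⟩

instance (a b : ℕ) : DecidableRel (bip a b).Adj :=
  fun i j => inferInstanceAs (Decidable (_ ≠ _))

/-- The cycle `C_n` on `Fin n` (for `n ≥ 3`). -/
def cyc (n : ℕ) : SimpleGraph (Fin n) where
  Adj i j := i ≠ j ∧ ((i.val + 1) % n = j.val ∨ (j.val + 1) % n = i.val)
  symm := ⟨fun _ _ h => ⟨h.1.symm, h.2.symm⟩⟩
  loopless := ⟨fun _ h => h.1 rfl⟩

instance (n : ℕ) : DecidableRel (cyc n).Adj :=
  fun i j => inferInstanceAs (Decidable (_ ∧ _))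

open Finset Filter Topology

/-!
Let `σ(x) = 1` for `x ≤ 1/2` and `σ(x) = -1` otherwise, and perturb the constant graphon `1/k`
along the rank-one kernel `σ ⊗ σ` with weights `(1, 1, -2, 0, …, 0)`: `Wᵢ = 1/k + cᵢ ε σ(x)σ(y)`.
Expanding the product over the edges of `H`, `∫ ∏_{uv ∈ F} σ(x_u)σ(x_v)` is `1` when every vertex
has even degree in the edge set `F` and `0` otherwise, so
`∑ᵢ t(H, Wᵢ) = k^{1-e(H)} + ∑_F k^{|F|-e(H)} (2 + (-2)^{|F|}) ε^{|F|}`,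
summed over the nonempty even-degree `F ⊆ E(H)`. Such an `F` contains a cycle, so `|F| ≥ ℓ`, and
the edge set of a shortest cycle is one with `|F| = ℓ`; as `ℓ` is odd its coefficient `2 - 2^ℓ` is
negative, so the sum drops below `k^{1-e(H)}` for small `ε > 0`.
-/

instance : IsProbabilityMeasure muI := ⟨by simp [Real.volume_Icc]⟩

def halfSign (x : ℝ) : ℝ := if x ≤ 1 / 2 then 1 else -1

@[fun_prop]
lemma measurable_halfSign : Measurable halfSign :=
  Measurable.ite measurableSet_Iic measurable_const measurable_const

lemma abs_halfSign (x : ℝ) : |halfSign x| = 1 := by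
  unfold halfSign; split_ifs <;> simp

lemma halfSign_eq_indicator (x : ℝ) :
    halfSign x = 2 * (Set.Iic (1 / 2 : ℝ)).indicator 1 x - 1 := by
  by_cases h : x ≤ 1 / 2
  · rw [halfSign, if_pos h, Set.indicator_of_mem (Set.mem_Iic.2 h)]; norm_num
  · rw [halfSign, if_neg h, Set.indicator_of_notMem (mt Set.mem_Iic.1 h)]; norm_num

lemma integral_halfSign : ∫ x, halfSign x ∂muI = 0 := by
  have hhalf : Set.Iic (1 / 2 : ℝ) ∩ Set.Icc 0 1 = Set.Icc 0 (1 / 2) := by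
    ext x
    simp only [Set.mem_inter_iff, Set.mem_Iic, Set.mem_Icc]
    exact ⟨fun ⟨h, h₀, _⟩ => ⟨h₀, h⟩, fun ⟨h₀, h⟩ => ⟨h, h₀, by linarith⟩⟩
  simp_rw [halfSign_eq_indicator]
  rw [integral_sub ((integrable_const _).indicator measurableSet_Iic |>.const_mul 2)
    (integrable_const 1), integral_const_mul, integral_indicator_one measurableSet_Iic,
    measureReal_def, Measure.restrict_apply measurableSet_Iic, hhalf, Real.volume_Icc]
  norm_num

lemma integral_halfSign_pow (d : ℕ) :
    ∫ x, halfSign x ^ d ∂muI = if Even d then 1 else 0 := by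
  have hsq (x : ℝ) : halfSign x ^ 2 = 1 := by rw [← sq_abs, abs_halfSign, one_pow]
  rcases Nat.even_or_odd' d with ⟨c, rfl | rfl⟩
  · simp [pow_mul, hsq]
  · simp [pow_succ, pow_mul, hsq, integral_halfSign]

lemma integral_prod_halfSign_pow {ι : Type*} [Fintype ι] (d : ι → ℕ) :
    ∫ x : ι → ℝ, ∏ i, halfSign (x i) ^ d i ∂(Measure.pi fun _ => muI) =
      if ∀ i, Even (d i) then 1 else 0 := by
  rw [integral_fintype_prod_eq_prod (fun i y => halfSign y ^ d i)]
  simp_rw [integral_halfSign_pow]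
  split_ifs with h
  · exact prod_eq_one fun i _ => if_pos (h i)
  · push Not at h
    obtain ⟨i, hi⟩ := h
    exact prod_eq_zero (mem_univ i) (if_neg hi)

lemma integrable_halfSign_pow (d : ℕ) : Integrable (fun x => halfSign x ^ d) muI :=
  .of_bound (by fun_prop) 1 (ae_of_all _ fun x => by simp [abs_halfSign])

section PairDegree

variable {V : Type*} [Fintype V] [DecidableEq V]

def pairDegree (F : Finset (V × V)) (v : V) : ℕ :=
  #{p ∈ F | p.1 = v} + #{p ∈ F | p.2 = v}

lemma prod_comp_eq_prod_pow_card_filter {ι M : Type*} [CommMonoid M] (s : Finset ι)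
    (g : ι → V) (f : V → M) : ∏ i ∈ s, f (g i) = ∏ v, f v ^ #{i ∈ s | g i = v} := by
  simp_rw [← prod_fiberwise' s g f, prod_const]

lemma prod_mul_eq_prod_pow_pairDegree {M : Type*} [CommMonoid M] (F : Finset (V × V))
    (f : V → M) : ∏ p ∈ F, f p.1 * f p.2 = ∏ v, f v ^ pairDegree F v := by
  simp_rw [prod_mul_distrib, prod_comp_eq_prod_pow_card_filter, pairDegree, pow_add,
    prod_mul_distrib]

end PairDegree

section Expansion

variable {m : ℕ}

def eulerianSubsets (H : SimpleGraph (Fin m)) [DecidableRel H.Adj] :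
    Finset (Finset (Fin m × Fin m)) :=
  {F ∈ (edgeFinset' H).powerset | ∀ v, Even (pairDegree F v)}

lemma homDensity_const_add_mul_halfSign (H : SimpleGraph (Fin m)) [DecidableRel H.Adj]
    (a b : ℝ) :
    homDensity H (fun x y => a + b * (halfSign x * halfSign y)) =
      ∑ F ∈ eulerianSubsets H, a ^ (edgeCount H - #F) * b ^ #F := by
  have hexpand (x : Fin m → ℝ) :
      ∏ p ∈ edgeFinset' H, (a + b * (halfSign (x p.1) * halfSign (x p.2))) =
        ∑ F ∈ (edgeFinset' H).powerset,
          a ^ (edgeCount H - #F) * b ^ #F * ∏ v, halfSign (x v) ^ pairDegree F v := by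
    simp_rw [add_comm a, prod_add]
    refine sum_congr rfl fun F hF => ?_
    rw [prod_mul_distrib, prod_const, prod_const, prod_mul_eq_prod_pow_pairDegree F
      (fun v => halfSign (x v)), card_sdiff_of_subset (mem_powerset.1 hF), edgeCount]
    ring
  unfold homDensity
  simp_rw [hexpand]
  rw [integral_finsetSum _ fun F _ =>
    (Integrable.fintype_prod fun v => integrable_halfSign_pow (pairDegree F v)).const_mul _]
  simp_rw [integral_const_mul, integral_prod_halfSign_pow, eulerianSubsets, sum_filter,
    mul_ite, mul_one, mul_zero]

end Expansion

namespace SimpleGraph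

variable {V : Type*} {G : SimpleGraph V}

lemma exists_isCycle_of_degree_ne_one [Fintype V] [DecidableRel G.Adj] {u v : V}
    (huv : G.Adj u v) (hdeg : ∀ w, G.degree w ≠ 1) : ∃ (a : V) (c : G.Walk a a), c.IsCycle := by
  by_contra hcyc
  push Not at hcyc
  have hacyc : G.IsAcyclic := hcyc
  -- In a forest, a path can always be extended at its end, since the last vertex has a
  -- neighbour other than the penultimate one and it cannot lie on the path.
  have hlong (n : ℕ) : ∃ (w : V) (p : G.Walk u w), p.IsPath ∧ p.length = n + 1 := by
    induction n with
    | zero => exact ⟨v, .cons huv .nil, by simp [huv.ne], rfl⟩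
    | succ n ih =>
      obtain ⟨w, p, hp, hlen⟩ := ih
      have hnil : ¬ p.Nil := by rw [← Walk.length_eq_zero_iff]; omega
      have hpen : p.penultimate ∈ G.neighborFinset w := by
        simpa using (p.adj_penultimate hnil).symm
      obtain ⟨x, hx, hxpen⟩ := exists_mem_ne
        (lt_of_le_of_ne (card_pos.2 ⟨_, hpen⟩) (hdeg w).symm) p.penultimate
      rw [mem_neighborFinset] at hx
      have hxp : x ∉ p.support := fun h => hxpen (hacyc.eq_penultimate_of_adj_end hp hx h)
      exact ⟨x, p.concat hx, hp.concat hxp hx, by simp [hlen]⟩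
  obtain ⟨w, p, hp, hlen⟩ := hlong (Fintype.card V)
  have := hp.length_lt
  omega

lemma girth_le_card_of_forall_even [Finite V] [DecidableEq V] {S : Finset (Sym2 V)}
    (hS : ↑S ⊆ G.edgeSet) (hne : S.Nonempty) (heven : ∀ v, Even #{e ∈ S | v ∈ e}) :
    G.girth ≤ #S := by
  classical
  have := Fintype.ofFinite V
  set G' := fromEdgeSet (S : Set (Sym2 V))
  have hG' : G'.edgeFinset = S := by
    rw [← coe_inj, coe_edgeFinset, edgeSet_fromEdgeSet, sdiff_eq_left.2]
    exact Set.disjoint_left.2 fun e he => G.not_isDiag_of_mem_edgeSet (hS he)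
  have hle : G' ≤ G := (G.fromEdgeSet_le).2 fun e he => hS he.1
  obtain ⟨e, he⟩ := hne
  induction e using Sym2.ind with | h u v => ?_
  have huv : G'.Adj u v := by
    rw [← mem_edgeSet, ← mem_edgeFinset, hG']; exact he
  obtain ⟨a, c, hc⟩ := exists_isCycle_of_degree_ne_one huv fun w hw => by
    have := heven w
    rw [← hG', ← incidenceFinset_eq_filter, card_incidenceFinset_eq_degree, hw] at this
    exact Nat.not_even_one this
  calc G.girth ≤ (c.mapLe hle).length := girth_le_length (hc.mapLe hle)
    _ = c.length := Walk.length_mapLe hle c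
    _ ≤ #G'.edgeFinset := hc.isTrail.length_le_card_edgeFinset
    _ = #S := by rw [hG']

lemma exists_forall_even_card_eq_girth [DecidableEq V] (h : ¬ G.IsAcyclic) :
    ∃ S : Finset (Sym2 V), ↑S ⊆ G.edgeSet ∧ #S = G.girth ∧ ∀ v, Even #{e ∈ S | v ∈ e} := by
  obtain ⟨a, c, hc, hlen⟩ := exists_girth_eq_length.2 h
  have hnodup := hc.isTrail.edges_nodup
  refine ⟨c.edges.toFinset, fun e he => c.edges_subset_edgeSet (List.mem_toFinset.1 he), ?_,
    fun v => ?_⟩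
  · rw [List.toFinset_card_of_nodup hnodup, c.length_edges, hlen]
  · have : {e ∈ c.edges.toFinset | v ∈ e} = (c.edges.filter (v ∈ ·)).toFinset := by
      ext; simp
    rw [this, List.toFinset_card_of_nodup (hnodup.filter _), ← List.countP_eq_length_filter]
    exact (hc.isTrail.even_countP_edges_iff v).2 fun h => absurd rfl h

end SimpleGraph

section EdgeFinset'

variable {m : ℕ} {G : SimpleGraph (Fin m)} [DecidableRel G.Adj]

lemma mem_edgeFinset' {p : Fin m × Fin m} : p ∈ edgeFinset' G ↔ p.1 < p.2 ∧ G.Adj p.1 p.2 := by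
  simp [edgeFinset']

lemma injOn_sym2Mk_edgeFinset' :
    Set.InjOn (Function.uncurry Sym2.mk) (edgeFinset' G : Set (Fin m × Fin m)) := by
  rintro ⟨a, b⟩ hab ⟨c, d⟩ hcd h
  have hab := (mem_edgeFinset'.1 hab).1
  have hcd := (mem_edgeFinset'.1 hcd).1
  rcases Sym2.eq_iff.1 (by simpa using h) with ⟨rfl, rfl⟩ | ⟨rfl, rfl⟩
  · rfl
  · exact absurd (hab.trans hcd) (lt_irrefl _)

lemma exists_mem_edgeFinset'_sym2Mk_eq {e : Sym2 (Fin m)} (he : e ∈ G.edgeSet) :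
    ∃ p ∈ edgeFinset' G, Function.uncurry Sym2.mk p = e := by
  induction e using Sym2.ind with | h a b => ?_
  rcases lt_or_gt_of_ne (G.ne_of_adj he) with hab | hba
  · exact ⟨(a, b), mem_edgeFinset'.2 ⟨hab, he⟩, rfl⟩
  · exact ⟨(b, a), mem_edgeFinset'.2 ⟨hba, he.symm⟩, Sym2.eq_swap⟩

lemma pairDegree_eq_card_filter_mem {F : Finset (Fin m × Fin m)} (hF : F ⊆ edgeFinset' G)
    (v : Fin m) : pairDegree F v = #{e ∈ F.image (Function.uncurry Sym2.mk) | v ∈ e} := by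
  have hlt (p) (hp : p ∈ F) : p.1 < p.2 := (mem_edgeFinset'.1 (hF hp)).1
  rw [filter_image, card_image_of_injOn (injOn_sym2Mk_edgeFinset'.mono
    (coe_subset.2 ((filter_subset _ _).trans hF)))]
  have hmem (p : Fin m × Fin m) : v ∈ Function.uncurry Sym2.mk p ↔ p.1 = v ∨ p.2 = v := by
    simp [Function.uncurry, Sym2.mem_iff, eq_comm]
  simp_rw [hmem, filter_or]
  rw [pairDegree, card_union_of_disjoint (disjoint_filter.2 fun p hp h₁ h₂ => by
    have := hlt p hp; omega)]

end EdgeFinset'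

section Eulerian

variable {m : ℕ} {H : SimpleGraph (Fin m)} [DecidableRel H.Adj]

lemma empty_mem_eulerianSubsets : ∅ ∈ eulerianSubsets H :=
  mem_filter.2 ⟨empty_mem_powerset _, fun v => by simp [pairDegree]⟩

lemma girth_le_card_of_mem_eulerianSubsets {F : Finset (Fin m × Fin m)}
    (hF : F ∈ eulerianSubsets H) (hne : F.Nonempty) : H.girth ≤ #F := by
  obtain ⟨hsub, heven⟩ := mem_filter.1 hF
  have hsub := mem_powerset.1 hsub
  rw [← card_image_of_injOn (injOn_sym2Mk_edgeFinset'.mono (coe_subset.2 hsub))]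
  refine H.girth_le_card_of_forall_even ?_ (hne.image _)
    fun v => pairDegree_eq_card_filter_mem hsub v ▸ heven v
  intro e he
  obtain ⟨p, hp, rfl⟩ := mem_image.1 he
  exact (mem_edgeFinset'.1 (hsub hp)).2

lemma exists_mem_eulerianSubsets_card_eq_girth (h : ¬ H.IsAcyclic) :
    ∃ F ∈ eulerianSubsets H, #F = H.girth := by
  obtain ⟨S, hS, hcard, heven⟩ := H.exists_forall_even_card_eq_girth h
  set F := {p ∈ edgeFinset' H | Function.uncurry Sym2.mk p ∈ S}
  have hFsub : F ⊆ edgeFinset' H := filter_subset _ _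
  have himage : F.image (Function.uncurry Sym2.mk) = S := by
    ext e
    refine ⟨fun he => ?_, fun he => ?_⟩
    · obtain ⟨p, hp, rfl⟩ := mem_image.1 he
      exact (mem_filter.1 hp).2
    · obtain ⟨p, hp, rfl⟩ := exists_mem_edgeFinset'_sym2Mk_eq (hS he)
      exact mem_image_of_mem _ (mem_filter.2 ⟨hp, he⟩)
  refine ⟨F, mem_filter.2 ⟨mem_powerset.2 hFsub, fun v => ?_⟩, ?_⟩
  · rw [pairDegree_eq_card_filter_mem hFsub, himage]
    exact heven v
  · rw [← hcard, ← himage,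
      card_image_of_injOn (injOn_sym2Mk_edgeFinset'.mono (coe_subset.2 hFsub))]

end Eulerian

lemma eventually_sum_mul_pow_neg {ι : Type*} (s : Finset ι) (a : ι → ℝ) (d : ι → ℕ) {l : ℕ}
    (hd : ∀ i ∈ s, l ≤ d i) (hlead : ∑ i ∈ s with d i = l, a i < 0) :
    ∀ᶠ ε in 𝓝[>] 0, ∑ i ∈ s, a i * ε ^ d i < 0 := by
  set g : ℝ → ℝ := fun ε => ∑ i ∈ s, a i * ε ^ (d i - l)
  have hg0 : g 0 < 0 := by
    convert hlead using 1
    simp only [g, sum_filter]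
    refine sum_congr rfl fun i hi => ?_
    rcases (hd i hi).eq_or_lt with h | h
    · simp [← h]
    · rw [if_neg h.ne', zero_pow (by omega), mul_zero]
  have hg : ∀ᶠ ε in 𝓝 0, g ε < 0 :=
    ((continuous_finsetSum _ fun i _ => by fun_prop).tendsto 0).eventually_lt_const hg0
  filter_upwards [nhdsWithin_le_nhds hg, self_mem_nhdsWithin] with ε hgε (hε : 0 < ε)
  have hsplit : ∑ i ∈ s, a i * ε ^ d i = ε ^ l * g ε := by
    rw [mul_sum]
    refine sum_congr rfl fun i hi => ?_
    rw [← Nat.add_sub_cancel' (hd i hi), pow_add, Nat.add_sub_cancel_left]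
    ring
  rw [hsplit]
  exact mul_neg_of_pos_of_neg (pow_pos hε l) hgε

lemma isGraphon_const_add_mul_halfSign {a b : ℝ} (h₀ : |b| ≤ a) (h₁ : a + |b| ≤ 1) :
    IsGraphon fun x y => a + b * (halfSign x * halfSign y) := by
  refine ⟨by fun_prop, fun x y => by ring, fun x y => ?_⟩
  have : |b * (halfSign x * halfSign y)| = |b| := by
    rw [abs_mul, abs_mul, abs_halfSign, abs_halfSign, mul_one, mul_one]
  constructor <;> linarith [abs_le.1 this.le, le_abs_self (b * (halfSign x * halfSign y)),
    neg_abs_le (b * (halfSign x * halfSign y))]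

lemma sum_homDensity_const_add_mul_halfSign {m : ℕ} (H : SimpleGraph (Fin m))
    [DecidableRel H.Adj] {ι : Type*} [Fintype ι] (a : ℝ) (b : ι → ℝ) :
    ∑ i, homDensity H (fun x y => a + b i * (halfSign x * halfSign y)) =
      ∑ F ∈ eulerianSubsets H, a ^ (edgeCount H - #F) * ∑ i, b i ^ #F := by
  simp_rw [homDensity_const_add_mul_halfSign, mul_sum]
  exact sum_comm

def perturbWeights (n : ℕ) : Fin (3 + n) → ℝ := Fin.append ![1, 1, -2] 0

lemma sum_perturbWeights_pow (n : ℕ) {j : ℕ} (hj : j ≠ 0) :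
    ∑ i, perturbWeights n i ^ j = 2 + (-2) ^ j := by
  simp [perturbWeights, Fin.sum_univ_add, Fin.sum_univ_three, zero_pow hj]
  ring

lemma sum_perturbWeights (n : ℕ) : ∑ i, perturbWeights n i = 0 := by
  simpa using sum_perturbWeights_pow n one_ne_zero

lemma abs_perturbWeights_le (n : ℕ) (i : Fin (3 + n)) : |perturbWeights n i| ≤ 2 := by
  induction i using Fin.addCases with
  | left i => rw [perturbWeights, Fin.append_left]; fin_cases i <;> norm_num
  | right i => simp [perturbWeights]

def perturbedGraphons (n : ℕ) (ε : ℝ) (i : Fin (3 + n)) (x y : ℝ) : ℝ :=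
  1 / (3 + n : ℕ) + perturbWeights n i * ε * (halfSign x * halfSign y)

section PerturbedGraphons

variable (n : ℕ) {ε : ℝ}

lemma sum_perturbedGraphons (ε x y : ℝ) : ∑ i, perturbedGraphons n ε i x y = 1 := by
  simp only [perturbedGraphons, sum_add_distrib, ← sum_mul, sum_perturbWeights, sum_const,
    card_univ, Fintype.card_fin, nsmul_eq_mul]
  field_simp
  ring

lemma abs_perturbWeights_mul_le (hε : 0 ≤ ε) (i : Fin (3 + n)) :
    |perturbWeights n i * ε| ≤ 2 * ε := by
  rw [abs_mul, abs_of_nonneg hε]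
  exact mul_le_mul_of_nonneg_right (abs_perturbWeights_le n i) hε

lemma abs_perturbedGraphons_sub_le (hε : 0 ≤ ε) (i : Fin (3 + n)) (x y : ℝ) :
    |perturbedGraphons n ε i x y - 1 / (3 + n : ℕ)| ≤ 2 * ε := by
  rw [perturbedGraphons, add_sub_cancel_left, abs_mul, abs_mul (halfSign x), abs_halfSign,
    abs_halfSign, mul_one, mul_one]
  exact abs_perturbWeights_mul_le n hε i

lemma isGraphon_perturbedGraphons (hε : 0 ≤ ε) (hεk : 2 * ε ≤ 1 / (3 + n : ℕ))
    (i : Fin (3 + n)) : IsGraphon (perturbedGraphons n ε i) := by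
  have hb := abs_perturbWeights_mul_le n hε i
  have hk : (1 / (3 + n : ℕ) : ℝ) ≤ 1 / 2 := by
    gcongr
    push_cast
    linarith [n.cast_nonneg (α := ℝ)]
  exact isGraphon_const_add_mul_halfSign (hb.trans hεk) (by linarith)

lemma sum_homDensity_perturbedGraphons {m : ℕ} (H : SimpleGraph (Fin m)) [DecidableRel H.Adj]
    (ε : ℝ) :
    ∑ i, homDensity H (perturbedGraphons n ε i) =
      ((3 + n : ℕ) : ℝ) ^ (1 - (edgeCount H : ℤ)) +
        ∑ F ∈ (eulerianSubsets H).erase ∅,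
          (1 / (3 + n : ℕ) : ℝ) ^ (edgeCount H - #F) * (2 + (-2) ^ #F) * ε ^ #F := by
  unfold perturbedGraphons
  rw [sum_homDensity_const_add_mul_halfSign, ← add_sum_erase _ _ empty_mem_eulerianSubsets]
  congr 1
  · rw [zpow_sub₀ (by positivity), zpow_one, zpow_natCast]
    simp [div_eq_mul_inv]
    ring
  · refine sum_congr rfl fun F hF => ?_
    have hF : #F ≠ 0 := card_ne_zero.2 (nonempty_iff_ne_empty.2 (ne_of_mem_erase hF))
    simp_rw [mul_pow, ← sum_mul, sum_perturbWeights_pow n hF]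
    ring

lemma eventually_sum_homDensity_perturbedGraphons_lt {m : ℕ} (H : SimpleGraph (Fin m))
    [DecidableRel H.Adj] {l : ℕ} (hodd : Odd l) (hl : H.girth = l) :
    ∀ᶠ ε in 𝓝[>] 0, ∑ i, homDensity H (perturbedGraphons n ε i) <
      ((3 + n : ℕ) : ℝ) ^ (1 - (edgeCount H : ℤ)) := by
  have hcyc : ¬ H.IsAcyclic := fun h => by
    rw [SimpleGraph.girth_eq_zero.2 h] at hl
    exact absurd hodd (by simp [← hl])
  have hlead : (2 : ℝ) + (-2) ^ l < 0 := by
    rw [hodd.neg_pow]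
    linarith [pow_le_pow_right₀ (by norm_num : (1 : ℝ) ≤ 2) (hl ▸ H.three_le_girth hcyc)]
  obtain ⟨F₀, hF₀, hF₀l⟩ := exists_mem_eulerianSubsets_card_eq_girth hcyc
  have hF₀ne : F₀ ≠ ∅ := by
    rintro rfl
    exact absurd hodd (by simp [← hl, ← hF₀l])
  simp_rw [sum_homDensity_perturbedGraphons, add_lt_iff_neg_left]
  refine eventually_sum_mul_pow_neg _ _ _
    (fun F hF => hl ▸ girth_le_card_of_mem_eulerianSubsets (mem_of_mem_erase hF)
      (nonempty_iff_ne_empty.2 (ne_of_mem_erase hF)))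
    (sum_neg (fun F hF => ?_) ⟨F₀, mem_filter.2 ⟨mem_erase.2 ⟨hF₀ne, hF₀⟩, hF₀l.trans hl⟩⟩)
  rw [(mem_filter.1 hF).2]
  exact mul_neg_of_pos_of_neg (by positivity) hlead

end PerturbedGraphons

/-- for `k ≥ 3`, no graph of odd girth is locally `k`-common. -/
theorem odd_girth_not_locally_kCommon {m : ℕ} (H : SimpleGraph (Fin m))
    [DecidableRel H.Adj] (k : ℕ) (hk : 3 ≤ k)
    (l : ℕ) (hodd : Odd l) (hgirth : H.girth = (l : ℕ∞)) :
    ∀ ε₀ : ℝ, 0 < ε₀ →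
      ∃ W : Fin k → ℝ → ℝ → ℝ, (∀ i, IsGraphon (W i)) ∧
        (∀ x y, ∑ i, W i x y = 1) ∧
        (∀ i, ∀ x y, |W i x y - 1 / k| ≤ ε₀) ∧
        ∑ i, homDensity H (W i) < (k : ℝ) ^ (1 - (edgeCount H : ℤ)) := by
  intro ε₀ hε₀
  obtain ⟨n, rfl⟩ := Nat.exists_eq_add_of_le hk
  have hsmall : ∀ᶠ ε in 𝓝[>] (0 : ℝ), 0 < ε ∧ 2 * ε < min ε₀ (1 / (3 + n : ℕ)) := by
    filter_upwards [eventually_mem_nhdsWithin, nhdsWithin_le_nhds (eventually_lt_nhds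
      (by positivity : (0 : ℝ) < min ε₀ (1 / (3 + n : ℕ)) / 2))] with ε hε hεδ
    exact ⟨hε, by linarith⟩
  obtain ⟨ε, hlt, hε, hεδ⟩ := ((eventually_sum_homDensity_perturbedGraphons_lt n H hodd
    (by exact_mod_cast hgirth)).and hsmall).exists
  refine ⟨perturbedGraphons n ε,
    isGraphon_perturbedGraphons n hε.le (hεδ.le.trans (min_le_right _ _)),
    sum_perturbedGraphons n ε, fun i x y => ?_, hlt⟩
  exact (abs_perturbedGraphons_sub_le n hε.le i x y).trans (hεδ.le.trans (min_le_left _ _))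

end
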